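/- arXiv:1309.2518 — 4 statements merged into one kernel-verified Lean document; each statement's English description precedes it below -/
import Mathlib

section
/- Suppose a group G acts geometrically on two CAT(0) spaces X and Y with basepoints x₀ ∈ X and y₀ ∈ Y, and the condition (*) holds: there exist N, M > 0 with G·B(x₀,N) = X, G·B(y₀,M) = Y, and for all g, a ∈ G, [x₀,gx₀] ∩ B(ax₀,N) ≠ ∅ implies [y₀,gy₀] ∩ B(ay₀,M) ≠ ∅. Then for every sequence (gᵢ) in G, if (gᵢx₀) is a Cauchy sequence in X ∪ ∂X, then (gᵢy₀) is a Cauchy sequence in Y ∪ ∂Y. -/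
open Metric Filter Topology

/-- A unit-speed geodesic segment from `a` to `b`, parametrized on `[0, dist a b]`. -/
def IsGeodSegment {X : Type*} [MetricSpace X] (f : ℝ → X) (a b : X) : Prop :=
  f 0 = a ∧ f (dist a b) = b ∧
    ∀ s ∈ Set.Icc (0:ℝ) (dist a b), ∀ t ∈ Set.Icc (0:ℝ) (dist a b),
      dist (f s) (f t) = |s - t|

/-- `x` is a Cauchy sequence in `X ∪ ∂X` (cone-topology sense), where `c z` is the
geodesic from the basepoint `x₀` to `z`. -/
def BdryCauchy {X : Type*} [MetricSpace X] (x₀ : X) (c : X → ℝ → X) (x : ℕ → X) : Prop :=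
  ∃ ε₀ > 0, ∀ r > 0, ∃ i₀ : ℕ, ∀ i ≥ i₀,
    r ≤ dist x₀ (x i) ∧ dist (c (x i₀) r) (c (x i) r) < ε₀

lemma geod_dist_base {X : Type*} [MetricSpace X] {f : ℝ → X} {a b : X}
    (h : IsGeodSegment f a b) {t : ℝ} (ht : t ∈ Set.Icc (0:ℝ) (dist a b)) :
    dist a (f t) = t := by
  have h0 : (0:ℝ) ∈ Set.Icc (0:ℝ) (dist a b) := ⟨le_refl _, dist_nonneg⟩
  have h2 := h.2.2 0 h0 t ht
  rw [h.1] at h2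
  rw [h2, zero_sub, abs_neg, abs_of_nonneg ht.1]

theorem stmt2 {X Y G : Type*} [MetricSpace X] [MetricSpace Y] [ProperSpace X] [ProperSpace Y]
    [Group G] [MulAction G X] [MulAction G Y]
    (hGX : ∀ g : G, Isometry (fun x : X => g • x))
    (hGY : ∀ g : G, Isometry (fun y : Y => g • y))
    (x₀ : X) (y₀ : Y)
    (cX : X → ℝ → X) (cY : Y → ℝ → Y)
    (hcX : ∀ z : X, IsGeodSegment (cX z) x₀ z)
    (hcY : ∀ z : Y, IsGeodSegment (cY z) y₀ z)
    (hconvX : ∀ z w : X, ∀ r R : ℝ, 0 ≤ r → r ≤ R → R ≤ dist x₀ z → R ≤ dist x₀ w →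
      dist (cX z r) (cX w r) ≤ dist (cX z R) (cX w R))
    (hconvY : ∀ z w : Y, ∀ r R : ℝ, 0 ≤ r → r ≤ R → R ≤ dist y₀ z → R ≤ dist y₀ w →
      dist (cY z r) (cY w r) ≤ dist (cY z R) (cY w R))
    (lam C : ℝ) (hlam : 0 < lam) (hC : 0 < C)
    (hqi : ∀ g h : G,
      (1 / lam) * dist (g • y₀) (h • y₀) - C ≤ dist (g • x₀) (h • x₀) ∧
      dist (g • x₀) (h • x₀) ≤ lam * dist (g • y₀) (h • y₀) + C)
    (N M : ℝ) (hN : 0 < N) (hM : 0 < M)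
    (hcovX : ∀ x : X, ∃ g : G, dist x (g • x₀) ≤ N)
    (hcovY : ∀ y : Y, ∃ g : G, dist y (g • y₀) ≤ M)
    (hstar : ∀ g a : G,
      (∃ s ∈ Set.Icc (0:ℝ) (dist x₀ (g • x₀)), dist (cX (g • x₀) s) (a • x₀) ≤ N) →
      (∃ s ∈ Set.Icc (0:ℝ) (dist y₀ (g • y₀)), dist (cY (g • y₀) s) (a • y₀) ≤ M))
    (g : ℕ → G)
    (hXCauchy : BdryCauchy x₀ cX (fun i => g i • x₀)) :
    BdryCauchy y₀ cY (fun i => g i • y₀) := by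

  obtain ⟨ε₀, hε₀, hX⟩ := hXCauchy
  refine ⟨4*M + 2*(lam*(2*N + ε₀) + lam*C) + 1, by nlinarith [mul_pos hlam hN, mul_pos hlam hε₀, mul_pos hlam hC], ?_⟩
  intro r hr
  have hr'pos : 0 < lam*(r+M) + N + C + 1 := by nlinarith [mul_pos hlam (show (0:ℝ) < r + M by linarith)]
  obtain ⟨i₀, hi₀⟩ := hX (lam*(r+M) + N + C + 1) hr'pos
  set r' : ℝ := lam*(r+M) + N + C + 1 with hr'def
  refine ⟨i₀, fun i hi => ?_⟩
  obtain ⟨hLi, hqq⟩ := hi₀ i hi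
  obtain ⟨hLi₀, -⟩ := hi₀ i₀ le_rfl
  simp only at hLi hqq hLi₀
  have hmemX_i : r' ∈ Set.Icc (0:ℝ) (dist x₀ (g i • x₀)) := ⟨hr'pos.le, hLi⟩
  have hmemX_i₀ : r' ∈ Set.Icc (0:ℝ) (dist x₀ (g i₀ • x₀)) := ⟨hr'pos.le, hLi₀⟩
  obtain ⟨a, ha⟩ := hcovX (cX (g i • x₀) r')
  obtain ⟨b, hb⟩ := hcovX (cX (g i₀ • x₀) r')
  obtain ⟨s, hs, hsM⟩ := hstar (g i) a ⟨r', hmemX_i, ha⟩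
  obtain ⟨t, ht, htM⟩ := hstar (g i₀) b ⟨r', hmemX_i₀, hb⟩
  -- distance from x₀ to a•x₀ and b•x₀ is at least r' - N
  have hq_i : dist x₀ (cX (g i • x₀) r') = r' := geod_dist_base (hcX _) hmemX_i
  have hq_i₀ : dist x₀ (cX (g i₀ • x₀) r') = r' := geod_dist_base (hcX _) hmemX_i₀
  have hdxa : r' - N ≤ dist x₀ (a • x₀) := by
    have h2 := dist_triangle x₀ (a • x₀) (cX (g i • x₀) r')
    have h3 := dist_comm (a • x₀) (cX (g i • x₀) r')
    linarith [ha]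
  have hdxb : r' - N ≤ dist x₀ (b • x₀) := by
    have h2 := dist_triangle x₀ (b • x₀) (cX (g i₀ • x₀) r')
    have h3 := dist_comm (b • x₀) (cX (g i₀ • x₀) r')
    linarith [hb]
  -- distances from y₀ to points on Y-geodesics
  have hdys : dist y₀ (cY (g i • y₀) s) = s := geod_dist_base (hcY _) hs
  have hdyt : dist y₀ (cY (g i₀ • y₀) t) = t := geod_dist_base (hcY _) ht
  -- dist y₀ (a•y₀) within M of s, similarly b / t
  have hda1 : dist y₀ (a • y₀) ≤ s + M := by
    have h2 := dist_triangle y₀ (cY (g i • y₀) s) (a • y₀)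
    linarith
  have hda2 : s ≤ dist y₀ (a • y₀) + M := by
    have h2 := dist_triangle y₀ (a • y₀) (cY (g i • y₀) s)
    have h3 := dist_comm (a • y₀) (cY (g i • y₀) s)
    linarith
  have hdb1 : dist y₀ (b • y₀) ≤ t + M := by
    have h2 := dist_triangle y₀ (cY (g i₀ • y₀) t) (b • y₀)
    linarith
  have hdb2 : t ≤ dist y₀ (b • y₀) + M := by
    have h2 := dist_triangle y₀ (b • y₀) (cY (g i₀ • y₀) t)
    have h3 := dist_comm (b • y₀) (cY (g i₀ • y₀) t)
    linarith
  -- quasi-isometry bounds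
  have hqa : dist x₀ (a • x₀) ≤ lam * dist y₀ (a • y₀) + C := by
    have h2 := (hqi a 1).2
    simpa [one_smul, dist_comm] using h2
  have hqb : dist x₀ (b • x₀) ≤ lam * dist y₀ (b • y₀) + C := by
    have h2 := (hqi b 1).2
    simpa [one_smul, dist_comm] using h2
  -- r ≤ s and r ≤ t
  have hsr : r ≤ s := by
    have hmul := mul_le_mul_of_nonneg_left hda1 hlam.le
    have key : lam * r < lam * s := by linarith [hmul, hdxa, hqa]
    exact ((mul_lt_mul_iff_right₀ hlam).mp key).le
  have htr : r ≤ t := by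
    have hmul := mul_le_mul_of_nonneg_left hdb1 hlam.le
    have key : lam * r < lam * t := by linarith [hmul, hdxb, hqb]
    exact ((mul_lt_mul_iff_right₀ hlam).mp key).le
  refine ⟨hsr.trans hs.2, ?_⟩
  -- bound dist (a•x₀) (b•x₀)
  have hab : dist (a • x₀) (b • x₀) ≤ 2*N + ε₀ := by
    have T := dist_triangle4 (a • x₀) (cX (g i • x₀) r') (cX (g i₀ • x₀) r') (b • x₀)
    have h3 := dist_comm (a • x₀) (cX (g i • x₀) r')
    have h4 := dist_comm (cX (g i • x₀) r') (cX (g i₀ • x₀) r')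
    linarith [ha, hb, hqq]
  have haby : dist (a • y₀) (b • y₀) ≤ lam * (2*N + ε₀) + lam * C := by
    have h2 := (hqi a b).1
    have h3 : dist (a • y₀) (b • y₀) ≤ lam * (dist (a • x₀) (b • x₀) + C) := by
      have h4 := mul_le_mul_of_nonneg_left
        (show (1/lam) * dist (a • y₀) (b • y₀) ≤ dist (a • x₀) (b • x₀) + C by linarith) hlam.le
      rwa [← mul_assoc, mul_one_div_cancel hlam.ne', one_mul] at h4
    have h5 : lam * (dist (a • x₀) (b • x₀) + C) ≤ lam * (2*N + ε₀ + C) :=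
      mul_le_mul_of_nonneg_left (by linarith) hlam.le
    have h6 : lam * (2*N + ε₀ + C) = lam * (2*N + ε₀) + lam * C := by ring
    linarith
  -- |dist y₀ (a•y₀) - dist y₀ (b•y₀)| ≤ dist (a•y₀) (b•y₀)
  have habd : |dist (a • y₀) y₀ - dist (b • y₀) y₀| ≤ dist (a • y₀) (b • y₀) :=
    abs_dist_sub_le (a • y₀) (b • y₀) y₀
  have habd1 : dist y₀ (a • y₀) ≤ dist y₀ (b • y₀) + dist (a • y₀) (b • y₀) := by
    have h1 := abs_le.mp habd
    rw [dist_comm (a • y₀) y₀, dist_comm (b • y₀) y₀] at h1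
    linarith [h1.2]
  have habd2 : dist y₀ (b • y₀) ≤ dist y₀ (a • y₀) + dist (a • y₀) (b • y₀) := by
    have h1 := abs_le.mp habd
    rw [dist_comm (a • y₀) y₀, dist_comm (b • y₀) y₀] at h1
    linarith [h1.1]
  set R := min t s with hRdef
  have hrR : r ≤ R := le_min htr hsr
  have hRt : R ≤ t := min_le_left t s
  have hRs : R ≤ s := min_le_right t s
  have hconv := hconvY (g i₀ • y₀) (g i • y₀) r R hr.le hrR (hRt.trans ht.2) (hRs.trans hs.2)
  have hRmem_t : R ∈ Set.Icc (0:ℝ) (dist y₀ (g i₀ • y₀)) := ⟨hr.le.trans hrR, hRt.trans ht.2⟩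
  have hRmem_s : R ∈ Set.Icc (0:ℝ) (dist y₀ (g i • y₀)) := ⟨hr.le.trans hrR, hRs.trans hs.2⟩
  have h1 : dist (cY (g i₀ • y₀) R) (cY (g i₀ • y₀) t) = t - R := by
    rw [(hcY (g i₀ • y₀)).2.2 R hRmem_t t ht, abs_of_nonpos (by linarith), neg_sub]
  have h5 : dist (cY (g i • y₀) s) (cY (g i • y₀) R) = s - R := by
    rw [(hcY (g i • y₀)).2.2 s hs R hRmem_s, abs_of_nonneg (by linarith)]
  -- (t - R) + (s - R) ≤ 2M + dist (a•y₀) (b•y₀)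
  have hst : t - R + (s - R) ≤ 2*M + dist (a • y₀) (b • y₀) := by
    rcases le_total t s with hts | hts
    · have hRe : R = t := min_eq_left hts
      rw [hRe]
      linarith
    · have hRe : R = s := min_eq_right hts
      rw [hRe]
      linarith
  have T1 := dist_triangle4 (cY (g i₀ • y₀) R) (cY (g i₀ • y₀) t) (b • y₀) (a • y₀)
  have T2 := dist_triangle4 (cY (g i₀ • y₀) R) (a • y₀) (cY (g i • y₀) s) (cY (g i • y₀) R)
  have h3 : dist (b • y₀) (a • y₀) = dist (a • y₀) (b • y₀) := dist_comm _ _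
  have h4 : dist (a • y₀) (cY (g i • y₀) s) = dist (cY (g i • y₀) s) (a • y₀) := dist_comm _ _
  calc dist (cY (g i₀ • y₀) r) (cY (g i • y₀) r)
      ≤ dist (cY (g i₀ • y₀) R) (cY (g i • y₀) R) := hconv
    _ ≤ 4*M + 2*(lam*(2*N + ε₀) + lam*C) := by linarith
    _ < 4*M + 2*(lam*(2*N + ε₀) + lam*C) + 1 := by linarith
end

section
/- Let G = F₂ × ℤ with F₂ the free group on {a,b}, acting on X = T × ℝ (T the Cayley graph of F₂, unit edge lengths) by the product action, and on Y = T × ℝ by the skewed action where (a,0)∗(t,r) = (a·t, r), (b,0)∗(t,r) = (b·t, r+2), (1,1)∗(t,r) = (t, r+1). With x₀ = y₀ = (1,0), for gᵢ = aⁱbⁱ ∈ F₂ the sequence (gᵢⁿ, 0)·x₀ converges in X ∪ ∂X as n → ∞ to the boundary point [gᵢ^∞, 0], while (gᵢⁿ, 0)∗y₀ converges in Y ∪ ∂Y to the boundary point [gᵢ^∞, π/4] (the point of ∂(T×ℝ) = ∂T ∗ ∂ℝ at angle π/4 toward +∞ in the ℝ-factor). -/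
open Metric Filter Topology

/-- The free group of rank 2, `F₂ = ⟨a, b⟩`. -/
abbrev F2 := FreeGroup Bool

/-- The generator `a` of `F₂`. -/
def fa : F2 := FreeGroup.of false

/-- The generator `b` of `F₂`. -/
def fb : F2 := FreeGroup.of true

/-- Word length of `w ∈ F₂` w.r.t. `{a, b}` (distance in the unit-edge Cayley graph `T`). -/
def wlen (w : F2) : ℕ := (FreeGroup.toWord w).length

/-- Exponent sum of the generator `b` in `w ∈ F₂`. -/
def bsum (w : F2) : ℤ :=
  Multiplicative.toAdd
    (FreeGroup.lift (fun x : Bool => Multiplicative.ofAdd (if x then (1:ℤ) else 0)) w)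

/-- The product action `(w, k) · (t, r) = (w t, r + k)` of `F₂ × ℤ` on `T × ℝ`. -/
def prodAct {T : Type*} [MulAction F2 T] (p : F2 × ℤ) (z : T × ℝ) : T × ℝ :=
  (p.1 • z.1, z.2 + p.2)

/-- The skewed (Bowers–Ruane) action of `F₂ × ℤ` on `T × ℝ`: `a` acts only on `T`, `b`
acts on `T` and shifts the `ℝ`-coordinate by `2`, and `(1,1)` shifts it by `1`. -/
def skewAct {T : Type*} [MulAction F2 T] (p : F2 × ℤ) (z : T × ℝ) : T × ℝ :=
  (p.1 • z.1, z.2 + p.2 + 2 * bsum p.1)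

/-- The sequence `z` in `T × ℝ` converges in the cone topology of `(T × ℝ) ∪ ∂(T × ℝ)`
to the boundary point `[ζ, θ] ∈ ∂T ∗ ∂ℝ`: the `T`-coordinates converge to `ζ ∈ ∂T`
(given an abstract convergence predicate `TConv` on `T ∪ ∂T`), the distances to the
basepoint go to infinity, and the limiting direction makes angle `θ` with the
`T`-factor, i.e. `height / tree-distance → tan θ`. -/
def ConvToBdry {T BT : Type*} [MetricSpace T] (TConv : (ℕ → T) → BT → Prop) (t₀ : T)
    (z : ℕ → T × ℝ) (ζ : BT) (θ : ℝ) : Prop :=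
  TConv (fun n => (z n).1) ζ ∧
  Tendsto (fun n => dist t₀ (z n).1) atTop atTop ∧
  Tendsto (fun n => (z n).2 / dist t₀ (z n).1) atTop (𝓝 (Real.tan θ))

/-! The orbit point `gᵢⁿ • t₀`, `gᵢ = aⁱbⁱ`, lies at tree distance `wlen gᵢⁿ = 2in`: the upper
bound is subadditivity of word length, the lower bound comes from the total exponent sum
`F₂ → ℤ`, which is `1`-Lipschitz for word length and takes the value `2in` on `gᵢⁿ`. Under the
product action the `ℝ`-coordinate stays `0` (angle `0`); under the skewed action it is twice the
`b`-exponent sum, `2in`, so height / distance is `1 = tan (π/4)`. -/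

namespace FreeGroup

variable {α : Type*} [DecidableEq α]

theorem abs_toAdd_lift_le_norm (f : α → ℤ) (hf : ∀ x, |f x| ≤ 1) (w : FreeGroup α) :
    |(lift (fun x => Multiplicative.ofAdd (f x)) w).toAdd| ≤ w.norm := by
  conv_lhs => rw [← mk_toWord (x := w), lift_mk]
  rw [norm]
  induction w.toWord with
  | nil => simp
  | cons p L ih =>
    obtain ⟨x, b⟩ := p
    have hx :
        |(cond b (Multiplicative.ofAdd (f x)) (Multiplicative.ofAdd (f x))⁻¹).toAdd| ≤ 1 := by
      cases b <;> simpa using hf x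
    simp only [List.map_cons, List.prod_cons, toAdd_mul, List.length_cons]
    push_cast
    exact (abs_add_le _ _).trans (by linarith)

theorem norm_pow_le (x : FreeGroup α) (n : ℕ) : (x ^ n).norm ≤ n * x.norm := by
  induction n with
  | zero => simp
  | succ n ih =>
    rw [pow_succ, add_mul, one_mul]
    exact (norm_mul_le _ _).trans (by omega)

end FreeGroup

theorem wlen_pow_fa_mul_fb (i j n : ℕ) : wlen ((fa ^ i * fb ^ j) ^ n) = (i + j) * n := by
  apply le_antisymm
  · calc wlen ((fa ^ i * fb ^ j) ^ n) ≤ n * (fa ^ i * fb ^ j).norm := FreeGroup.norm_pow_le _ _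
      _ ≤ n * (i + j) := by
          gcongr
          simpa [fa, fb, FreeGroup.norm_of_pow] using FreeGroup.norm_mul_le (fa ^ i) (fb ^ j)
      _ = (i + j) * n := mul_comm _ _
  · have h := FreeGroup.abs_toAdd_lift_le_norm (fun _ : Bool => (1 : ℤ)) (by simp)
      ((fa ^ i * fb ^ j) ^ n)
    simp only [fa, fb, map_pow, map_mul, FreeGroup.lift_apply_of, toAdd_pow, toAdd_mul,
      toAdd_ofAdd, Int.nsmul_eq_mul, mul_one, abs_mul, Nat.abs_cast] at h
    rw [mul_comm]
    exact_mod_cast h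

theorem bsum_pow_fa_mul_fb (i j n : ℕ) : bsum ((fa ^ i * fb ^ j) ^ n) = j * n := by
  simp [bsum, fa, fb, toAdd_pow, mul_comm]

theorem tendsto_dist_smul_pow_fa_mul_fb {T : Type*} [PseudoMetricSpace T] [MulAction F2 T]
    (t₀ : T) (hdist : ∀ w : F2, dist t₀ (w • t₀) = (wlen w : ℝ)) {i j : ℕ}
    (hij : 0 < i + j) :
    Tendsto (fun n : ℕ => dist t₀ ((fa ^ i * fb ^ j) ^ n • t₀)) atTop atTop := by
  simp only [hdist, wlen_pow_fa_mul_fb, Nat.cast_mul]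
  exact tendsto_natCast_atTop_atTop.const_mul_atTop (by exact_mod_cast hij)

theorem stmt12_general {T BT : Type*} [MetricSpace T] [MulAction F2 T]
    (t₀ : T)
    -- `T` is the Cayley graph of `F₂` with unit edge lengths
    (hdist : ∀ w : F2, dist t₀ (w • t₀) = (wlen w : ℝ))
    -- abstract boundary `∂T` of the tree, with convergence predicate `TConv`
    (TConv : (ℕ → T) → BT → Prop)
    -- `ζ i` is the boundary point `gᵢ^∞ ∈ ∂T`, `gᵢ = aⁱbⁱ`
    (ζ : ℕ → BT)
    (hζ : ∀ i : ℕ, 1 ≤ i → TConv (fun n => ((fa ^ i * fb ^ i) ^ n) • t₀) (ζ i)) :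
    ∀ i : ℕ, 1 ≤ i →
      -- under the product action, `(gᵢⁿ, 0) · (t₀, 0) → [gᵢ^∞, 0]`
      ConvToBdry TConv t₀
        (fun n => prodAct (((fa ^ i * fb ^ i) ^ n : F2), (0:ℤ)) (t₀, (0:ℝ)))
        (ζ i) 0 ∧
      -- under the skewed action, `(gᵢⁿ, 0) ∗ (t₀, 0) → [gᵢ^∞, π/4]`
      ConvToBdry TConv t₀
        (fun n => skewAct (((fa ^ i * fb ^ i) ^ n : F2), (0:ℤ)) (t₀, (0:ℝ)))
        (ζ i) (Real.pi / 4) := by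
  intro i hi
  have hd := tendsto_dist_smul_pow_fa_mul_fb t₀ hdist (i := i) (j := i) (by omega)
  refine ⟨⟨hζ i hi, hd, ?_⟩, ⟨hζ i hi, hd, ?_⟩⟩
  · simp [prodAct]
  · rw [Real.tan_pi_div_four]
    refine tendsto_const_nhds.congr' ?_
    filter_upwards [eventually_ge_atTop 1] with n hn
    simp only [skewAct, hdist, wlen_pow_fa_mul_fb, bsum_pow_fa_mul_fb]
    push_cast
    field_simp
    ring

theorem stmt12 {T BT : Type*} [MetricSpace T] [MulAction F2 T]
    (hiso : ∀ w : F2, Isometry (fun t : T => w • t))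
    (t₀ : T)
    -- `T` is the Cayley graph of `F₂` with unit edge lengths
    (hdist : ∀ w : F2, dist t₀ (w • t₀) = (wlen w : ℝ))
    -- abstract boundary `∂T` of the tree, with convergence predicate `TConv`
    (TConv : (ℕ → T) → BT → Prop)
    -- `ζ i` is the boundary point `gᵢ^∞ ∈ ∂T`, `gᵢ = aⁱbⁱ`
    (ζ : ℕ → BT)
    (hζ : ∀ i : ℕ, 1 ≤ i → TConv (fun n => ((fa ^ i * fb ^ i) ^ n) • t₀) (ζ i)) :
    ∀ i : ℕ, 1 ≤ i →
      -- under the product action, `(gᵢⁿ, 0) · (t₀, 0) → [gᵢ^∞, 0]`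
      ConvToBdry TConv t₀
        (fun n => prodAct (((fa ^ i * fb ^ i) ^ n : F2), (0:ℤ)) (t₀, (0:ℝ)))
        (ζ i) 0 ∧
      -- under the skewed action, `(gᵢⁿ, 0) ∗ (t₀, 0) → [gᵢ^∞, π/4]`
      ConvToBdry TConv t₀
        (fun n => skewAct (((fa ^ i * fb ^ i) ^ n : F2), (0:ℤ)) (t₀, (0:ℝ)))
        (ζ i) (Real.pi / 4) :=
  stmt12_general t₀ hdist TConv ζ hζ
end

section
/- Let X be a proper CAT(0) space with basepoint x₀, let α ∈ ∂X, and let (gᵢ) be a sequence of isometries of X such that (gᵢx₀) converges to α in X ∪ ∂X. Suppose there are constants M̃ such that d(gᵢx₀, [x₀, gⱼx₀]) ≤ M̃ for all i < j. Then d(gᵢx₀, Im ξ_α) ≤ M̃ + 1 for all i, where ξ_α is the geodesic ray from x₀ with ξ_α(∞) = α. -/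
open Metric Filter Topology

/-- A unit-speed geodesic ray emanating from `a`. -/
def IsGeodRay {X : Type*} [MetricSpace X] (f : ℝ → X) (a : X) : Prop :=
  f 0 = a ∧ ∀ s t : ℝ, 0 ≤ s → 0 ≤ t → dist (f s) (f t) = |s - t|

theorem stmt16 {X G : Type*} [MetricSpace X] [ProperSpace X] [Group G] [MulAction G X]
    (hG : ∀ g : G, Isometry (fun x : X => g • x))
    (x₀ : X) (c : X → ℝ → X)
    (hc : ∀ z : X, IsGeodSegment (c z) x₀ z)
    -- CAT(0) convexity for geodesics from the basepoint
    (hconv : ∀ z w : X, ∀ r R : ℝ, 0 ≤ r → r ≤ R → R ≤ dist x₀ z → R ≤ dist x₀ w →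
      dist (c z r) (c w r) ≤ dist (c z R) (c w R))
    (ξ : ℝ → X) (hξ : IsGeodRay ξ x₀)
    (g : ℕ → G)
    -- `gᵢ x₀ → α = ξ(∞)` in the cone topology of `X ∪ ∂X`
    (hα : ∀ ε > 0, ∀ R > 0, ∃ j₀ : ℕ, ∀ j ≥ j₀,
      R ≤ dist x₀ (g j • x₀) ∧ dist (ξ R) (c (g j • x₀) R) < ε)
    (Mtil : ℝ)
    -- `d(gᵢ x₀, [x₀, gⱼ x₀]) ≤ M̃` for all `i < j`
    (hMtil : ∀ i j : ℕ, i < j →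
      Metric.infDist (g i • x₀)
        (c (g j • x₀) '' Set.Icc (0:ℝ) (dist x₀ (g j • x₀))) ≤ Mtil) :
    ∀ i : ℕ, Metric.infDist (g i • x₀) (ξ '' Set.Ici (0:ℝ)) ≤ Mtil + 1 := by
  intro i
  have hεpos : (1/4:ℝ) > 0 := by norm_num
  -- Mtil ≥ 0
  have hseg := fun j => hc (g j • x₀)
  have hMnn : 0 ≤ Mtil := le_trans Metric.infDist_nonneg (hMtil i (i+1) (by omega))
  set d : ℝ := dist x₀ (g i • x₀) with hd
  set R : ℝ := d + Mtil + 1/4 with hR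
  have hRpos : 0 < R := by
    have : 0 ≤ d := dist_nonneg
    simp only [hR]; linarith
  obtain ⟨j₀, hj₀⟩ := hα ((1:ℝ)/4) hεpos R hRpos
  set j : ℕ := max j₀ (i+1) with hj
  have hij : i < j := lt_of_lt_of_le (by omega) (le_max_right _ _)
  have hjj₀ : j₀ ≤ j := le_max_left _ _
  obtain ⟨hc0, hcd, hciso⟩ := hc (g j • x₀)
  have hne : (c (g j • x₀) '' Set.Icc (0:ℝ) (dist x₀ (g j • x₀))).Nonempty :=
    ⟨c (g j • x₀) 0, Set.mem_image_of_mem _ ⟨le_refl 0, dist_nonneg⟩⟩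
  have hlt : Metric.infDist (g i • x₀)
      (c (g j • x₀) '' Set.Icc (0:ℝ) (dist x₀ (g j • x₀))) < Mtil + 1/4 :=
    lt_of_le_of_lt (hMtil i j hij) (by linarith)
  obtain ⟨y, hy, hdy⟩ := (Metric.infDist_lt_iff hne).mp hlt
  obtain ⟨r, hrmem, hry⟩ := hy
  have hr0 : 0 ≤ r := hrmem.1
  -- r = dist x₀ y
  have hrdist : dist x₀ y = r := by
    have h := hciso 0 ⟨le_refl 0, dist_nonneg⟩ r hrmem
    rw [hc0, hry] at h
    rw [h, abs_of_nonpos (by linarith)]; ring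
  have hrR : r ≤ R := by
    have := dist_triangle x₀ (g i • x₀) y
    rw [hrdist] at this
    rw [hR]
    linarith
  -- second application of hα at radius r (if r > 0)
  rcases eq_or_lt_of_le hr0 with hr0' | hrpos
  · -- r = 0 : y = x₀ and ξ 0 = x₀ is in the image
    have hy0 : y = x₀ := by rw [← hry, ← hr0', hc0]
    have hmem : ξ 0 ∈ ξ '' Set.Ici (0:ℝ) := Set.mem_image_of_mem _ (Set.mem_Ici.mpr (le_refl 0))
    calc Metric.infDist (g i • x₀) (ξ '' Set.Ici (0:ℝ)) ≤ dist (g i • x₀) (ξ 0) :=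
          Metric.infDist_le_dist_of_mem hmem
      _ = dist (g i • x₀) y := by rw [hξ.1, hy0]
      _ ≤ Mtil + 1 := by linarith [hdy]
  · obtain ⟨k₀, hk₀⟩ := hα ((1:ℝ)/4) hεpos r hrpos
    set k : ℕ := max k₀ j₀ with hk
    have hkr := hk₀ k (le_max_left _ _)
    have hkR := hj₀ k (le_max_right _ _)
    have hjR := hj₀ j hjj₀
    -- convexity between the two segments
    have hconvjk : dist (c (g j • x₀) r) (c (g k • x₀) r)
        ≤ dist (c (g j • x₀) R) (c (g k • x₀) R) :=
      hconv _ _ r R hr0 hrR hjR.1 hkR.1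
    have hfar : dist (c (g j • x₀) R) (c (g k • x₀) R) < 2 * (1/4:ℝ) := by
      have := dist_triangle (c (g j • x₀) R) (ξ R) (c (g k • x₀) R)
      rw [dist_comm (c (g j • x₀) R) (ξ R)] at this
      linarith [hjR.2, hkR.2]
    have hmem : ξ r ∈ ξ '' Set.Ici (0:ℝ) := Set.mem_image_of_mem _ hr0
    have hbound : dist (g i • x₀) (ξ r) ≤ Mtil + 1 := by
      have t1 : dist (g i • x₀) (ξ r) ≤ dist (g i • x₀) y + dist y (ξ r) :=
        dist_triangle _ _ _
      have t2 : dist y (ξ r) ≤ dist y (c (g k • x₀) r) + dist (c (g k • x₀) r) (ξ r) :=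
        dist_triangle _ _ _
      have t3 : dist y (c (g k • x₀) r) < 2 * (1/4:ℝ) := by rw [← hry]; linarith [hconvjk, hfar]
      have t4 : dist (c (g k • x₀) r) (ξ r) < 1/4 := by rw [dist_comm]; exact hkr.2
      
      linarith
    exact le_trans (Metric.infDist_le_dist_of_mem hmem) hbound
end

section
/- Let T' be the Cayley graph of the free group F₂ = ⟨a,b⟩ where each edge [g,ga] has length 2 and each edge [g,gb] has length 1, and let Y = T' × ℝ with the product metric, with F₂ × ℤ acting by the natural product action and y₀ = (1,0). Define g₁ = ab and g_n = g_{n-1}a^{2^{n-1}} for n even, g_n = g_{n-1}b^{2^{n-1}} for n odd (n ≥ 2), and ḡ_n = (g_n, 2ⁿ) ∈ F₂ × ℤ. Then the word length of g_n in F₂ is 2ⁿ, the T'-distance d_{T'}(1, g_n) satisfies: d_{T'}(1,g_n)/2ⁿ does not converge as n → ∞ (it oscillates between values bounded away from each other), and consequently the sequence (ḡ_n · y₀) does not converge to a point of ∂Y in Y ∪ ∂Y. -/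
/-!
The reduced word of `gₙ` is `a b a² b⁴ a⁸ ⋯`, each block as long as everything before it, so
`gₙ` has word length `2ⁿ`. Its weighted length `d_n = d_{T'}(1, gₙ)` satisfies
`3 d_n = 5 · 2ⁿ + 1` for even `n` and `3 d_n = 4 · 2ⁿ + 1` for odd `n`, so `d_n / 2ⁿ` has the two
limit points `5/3` and `4/3`. As `d_n / 2ⁿ` stays in `[1, 2]`, the slope `2ⁿ / d_n` of `ḡₙ y₀`
cannot converge either: `ḡₙ y₀` has no limiting angle, hence no limit in `∂Y`.
-/

open Metric Filter Topology

/-- Weighted word length of `w ∈ F₂`, where `a`-letters have length `2` and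
`b`-letters have length `1`; this is the distance `d_{T'}(1, w)` in the Cayley graph
`T'` of `F₂` with `a`-edges of length `2` and `b`-edges of length `1`. -/
def wlen2 (w : F2) : ℕ :=
  ((FreeGroup.toWord w).map (fun p => if p.1 then 1 else 2)).sum

/-- The sequence `g₁ = ab`, `gₙ = gₙ₋₁ a^{2^{n-1}}` for `n` even,
`gₙ = gₙ₋₁ b^{2^{n-1}}` for `n` odd (`n ≥ 2`). -/
def gseq : ℕ → F2
  | 0 => 1
  | 1 => fa * fb
  | (n + 2) => gseq (n + 1) * (if (n + 2) % 2 = 0 then fa ^ (2 ^ (n + 1)) else fb ^ (2 ^ (n + 1)))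

namespace FreeGroup

variable {α : Type*}

theorem isReduced_of_forall_snd {L : List (α × Bool)} (h : ∀ p ∈ L, p.2 = true) :
    IsReduced L :=
  (List.pairwise_of_forall_mem_list
    fun a ha b hb (_ : a.1 = b.1) => (h a ha).trans (h b hb).symm).isChain

variable [DecidableEq α]

def IsPositive (x : FreeGroup α) : Prop := ∀ p ∈ x.toWord, p.2 = true

theorem IsPositive.toWord_mul {x y : FreeGroup α} (hx : x.IsPositive) (hy : y.IsPositive) :
    (x * y).toWord = x.toWord ++ y.toWord := by
  rw [FreeGroup.toWord_mul, IsReduced.reduce_eq]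
  exact isReduced_of_forall_snd fun p hp => (List.mem_append.1 hp).elim (hx p) (hy p)

theorem IsPositive.mul {x y : FreeGroup α} (hx : x.IsPositive) (hy : y.IsPositive) :
    (x * y).IsPositive := by
  intro p hp
  rw [hx.toWord_mul hy] at hp
  exact (List.mem_append.1 hp).elim (hx p) (hy p)

theorem isPositive_of (a : α) : (of a).IsPositive := by
  simp [IsPositive, toWord_of]

theorem isPositive_of_pow (a : α) (n : ℕ) : (of a ^ n).IsPositive := by
  intro p hp
  rw [toWord_of_pow] at hp
  rw [List.eq_of_mem_replicate hp]

end FreeGroup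

theorem tendsto_div_pow_of_eq_mul_pow_add {a : ℕ → ℝ} {φ : ℕ → ℕ} {r c e : ℝ} (hr : 1 < r)
    (hφ : Tendsto φ atTop atTop) (h : ∀ k, a k = c * r ^ φ k + e) :
    Tendsto (fun k => a k / r ^ φ k) atTop (𝓝 c) := by
  have hinv : Tendsto (fun k => (r ^ φ k)⁻¹) atTop (𝓝 0) :=
    ((tendsto_pow_atTop_atTop_of_one_lt hr).comp hφ).inv_tendsto_atTop
  have hpow : ∀ k, r ^ φ k ≠ 0 := fun k => pow_ne_zero _ (by linarith)
  have hsplit : (fun k => a k / r ^ φ k) = fun k => c + e * (r ^ φ k)⁻¹ :=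
    funext fun k => by rw [h]; field_simp [hpow k]
  rw [hsplit]
  simpa using tendsto_const_nhds.add (hinv.const_mul e)

theorem not_tendsto_inv_of_not_tendsto {ι : Type*} {l : Filter ι} [l.NeBot] {u : ι → ℝ}
    {m M : ℝ} (hm : 0 < m) (hu : ∀ᶠ i in l, u i ∈ Set.Icc m M)
    (hlim : ¬ ∃ a, Tendsto u l (𝓝 a)) : ¬ ∃ t, Tendsto (fun i => (u i)⁻¹) l (𝓝 t) := by
  rintro ⟨t, ht⟩
  obtain ⟨i, hmi, hiM⟩ := hu.exists
  have hinv : ∀ᶠ i in l, M⁻¹ ≤ (u i)⁻¹ :=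
    hu.mono fun i hi => inv_anti₀ (hm.trans_le hi.1) hi.2
  have ht0 : t ≠ 0 :=
    ((inv_pos.2 (hm.trans_le (hmi.trans hiM))).trans_le (ge_of_tendsto ht hinv)).ne'
  exact hlim ⟨t⁻¹, by simpa using ht.inv₀ ht0⟩

open FreeGroup

theorem wlen_mul {x y : F2} (hx : x.IsPositive) (hy : y.IsPositive) :
    wlen (x * y) = wlen x + wlen y := by
  rw [wlen, hx.toWord_mul hy, List.length_append, wlen, wlen]

theorem wlen2_mul {x y : F2} (hx : x.IsPositive) (hy : y.IsPositive) :
    wlen2 (x * y) = wlen2 x + wlen2 y := by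
  rw [wlen2, hx.toWord_mul hy, List.map_append, List.sum_append, wlen2, wlen2]

theorem wlen_of_pow (a : Bool) (n : ℕ) : wlen (of a ^ n) = n := by
  simp [wlen, toWord_of_pow]

theorem wlen2_fa_pow (n : ℕ) : wlen2 (fa ^ n) = 2 * n := by
  simp [wlen2, fa, toWord_of_pow, mul_comm]

theorem wlen2_fb_pow (n : ℕ) : wlen2 (fb ^ n) = n := by
  simp [wlen2, fb, toWord_of_pow]

theorem wlen2_le_two_mul_wlen (w : F2) : wlen2 w ≤ 2 * wlen w := by
  rw [wlen2, wlen, mul_comm, ← List.length_map (fun p : Bool × Bool => if p.1 then 1 else 2)]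
  exact List.sum_le_card_nsmul _ _ fun k hk => by
    obtain ⟨p, -, rfl⟩ := List.mem_map.1 hk
    split_ifs <;> norm_num

theorem wlen_le_wlen2 (w : F2) : wlen w ≤ wlen2 w := by
  rw [wlen2, wlen, ← List.length_map (fun p : Bool × Bool => if p.1 then 1 else 2)]
  exact List.length_le_sum_of_one_le _ fun k hk => by
    obtain ⟨p, -, rfl⟩ := List.mem_map.1 hk
    split_ifs <;> norm_num

theorem gseq_two_mul_add_two (k : ℕ) :
    gseq (2 * k + 2) = gseq (2 * k + 1) * fa ^ 2 ^ (2 * k + 1) := by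
  rw [gseq, if_pos (by omega)]

theorem gseq_two_mul_add_three (k : ℕ) :
    gseq (2 * k + 3) = gseq (2 * k + 2) * fb ^ 2 ^ (2 * k + 2) := by
  rw [gseq, if_neg (by omega)]

theorem isPositive_gseq : ∀ n, (gseq n).IsPositive
  | 0 => by simp [IsPositive, gseq]
  | 1 => (isPositive_of false).mul (isPositive_of true)
  | n + 2 => by
    rw [gseq]
    split_ifs <;> exact (isPositive_gseq (n + 1)).mul (isPositive_of_pow _ _)

theorem wlen_gseq : ∀ n, 1 ≤ n → wlen (gseq n) = 2 ^ n
  | 1, _ => rfl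
  | n + 2, _ => by
    rw [gseq, wlen_mul (isPositive_gseq _) (by split_ifs <;> exact isPositive_of_pow _ _),
      wlen_gseq (n + 1) (by omega)]
    split_ifs <;> simp only [fa, fb, wlen_of_pow] <;> ring

theorem wlen2_gseq_two_mul_add_two (k : ℕ) :
    wlen2 (gseq (2 * k + 2)) = wlen2 (gseq (2 * k + 1)) + 2 * 2 ^ (2 * k + 1) := by
  rw [gseq_two_mul_add_two, wlen2_mul (y := fa ^ _) (isPositive_gseq _) (isPositive_of_pow _ _),
    wlen2_fa_pow]

theorem wlen2_gseq_two_mul_add_three (k : ℕ) :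
    wlen2 (gseq (2 * k + 3)) = wlen2 (gseq (2 * k + 2)) + 2 ^ (2 * k + 2) := by
  rw [gseq_two_mul_add_three, wlen2_mul (y := fb ^ _) (isPositive_gseq _) (isPositive_of_pow _ _),
    wlen2_fb_pow]

theorem three_mul_wlen2_gseq_two_mul_add_one :
    ∀ k, 3 * wlen2 (gseq (2 * k + 1)) = 4 * 2 ^ (2 * k + 1) + 1
  | 0 => rfl
  | k + 1 => by
    rw [show 2 * (k + 1) + 1 = 2 * k + 3 by ring, wlen2_gseq_two_mul_add_three,
      wlen2_gseq_two_mul_add_two, mul_add, mul_add, three_mul_wlen2_gseq_two_mul_add_one k]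
    ring

theorem three_mul_wlen2_gseq_two_mul_add_two (k : ℕ) :
    3 * wlen2 (gseq (2 * k + 2)) = 5 * 2 ^ (2 * k + 2) + 1 := by
  rw [wlen2_gseq_two_mul_add_two, mul_add, three_mul_wlen2_gseq_two_mul_add_one]
  ring

theorem not_tendsto_wlen2_gseq_div :
    ¬ ∃ l : ℝ, Tendsto (fun n => (wlen2 (gseq n) : ℝ) / 2 ^ n) atTop (𝓝 l) := by
  rintro ⟨l, hl⟩
  have hodd : StrictMono fun k : ℕ => 2 * k + 1 := strictMono_nat_of_lt_succ fun k => by omega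
  have heven : StrictMono fun k : ℕ => 2 * k + 2 := strictMono_nat_of_lt_succ fun k => by omega
  have h4 : l = 4 / 3 := tendsto_nhds_unique (hl.comp hodd.tendsto_atTop) <|
    tendsto_div_pow_of_eq_mul_pow_add (e := 1 / 3) one_lt_two hodd.tendsto_atTop fun k => by
      have h : (3 * wlen2 (gseq (2 * k + 1)) : ℝ) = 4 * 2 ^ (2 * k + 1) + 1 := by
        exact_mod_cast three_mul_wlen2_gseq_two_mul_add_one k
      linarith
  have h5 : l = 5 / 3 := tendsto_nhds_unique (hl.comp heven.tendsto_atTop) <|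
    tendsto_div_pow_of_eq_mul_pow_add (e := 1 / 3) one_lt_two heven.tendsto_atTop fun k => by
      have h : (3 * wlen2 (gseq (2 * k + 2)) : ℝ) = 5 * 2 ^ (2 * k + 2) + 1 := by
        exact_mod_cast three_mul_wlen2_gseq_two_mul_add_two k
      linarith
  norm_num [h4] at h5

theorem eventually_wlen2_gseq_div_mem_Icc :
    ∀ᶠ n in atTop, (wlen2 (gseq n) : ℝ) / 2 ^ n ∈ Set.Icc 1 2 := by
  filter_upwards [eventually_ge_atTop 1] with n hn
  have hlow : 2 ^ n ≤ wlen2 (gseq n) := wlen_gseq n hn ▸ wlen_le_wlen2 _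
  have hup : wlen2 (gseq n) ≤ 2 * 2 ^ n := wlen_gseq n hn ▸ wlen2_le_two_mul_wlen _
  have hpow : (0 : ℝ) < 2 ^ n := by positivity
  rw [Set.mem_Icc, le_div_iff₀ hpow, div_le_iff₀ hpow, one_mul]
  exact ⟨by exact_mod_cast hlow, by exact_mod_cast hup⟩

theorem stmt17_general {T BT : Type*} [MetricSpace T] [MulAction F2 T]
    (t₀ : T)
    -- `T = T'` is the Cayley graph with `a`-edges of length `2` and `b`-edges of length `1`
    (hdist : ∀ w : F2, dist t₀ (w • t₀) = (wlen2 w : ℝ))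
    -- abstract boundary `∂T'` with convergence predicate
    (TConv : (ℕ → T) → BT → Prop) :
    -- (1) the word length of `gₙ` is `2ⁿ`
    (∀ n : ℕ, 1 ≤ n → wlen (gseq n) = 2 ^ n) ∧
    -- (2) `d_{T'}(1, gₙ) / 2ⁿ` does not converge
    (¬ ∃ l : ℝ, Tendsto (fun n : ℕ => dist t₀ (gseq n • t₀) / 2 ^ n) atTop (𝓝 l)) ∧
    -- (3) hence `ḡₙ y₀ = (gₙ t₀, 2ⁿ)` converges to no boundary point of `Y = T' × ℝ`
    (¬ ∃ (ζ : BT) (θ : ℝ),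
      ConvToBdry TConv t₀ (fun n : ℕ => ((gseq n) • t₀, ((2:ℝ) ^ n))) ζ θ) := by
  refine ⟨wlen_gseq, by simpa only [hdist] using not_tendsto_wlen2_gseq_div, ?_⟩
  rintro ⟨ζ, θ, -, -, hθ⟩
  refine not_tendsto_inv_of_not_tendsto one_pos eventually_wlen2_gseq_div_mem_Icc
    not_tendsto_wlen2_gseq_div ⟨Real.tan θ, ?_⟩
  simpa only [hdist, inv_div] using hθ

theorem stmt17 {T BT : Type*} [MetricSpace T] [MulAction F2 T]
    (hiso : ∀ w : F2, Isometry (fun t : T => w • t))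
    (t₀ : T)
    -- `T = T'` is the Cayley graph with `a`-edges of length `2` and `b`-edges of length `1`
    (hdist : ∀ w : F2, dist t₀ (w • t₀) = (wlen2 w : ℝ))
    -- abstract boundary `∂T'` with convergence predicate
    (TConv : (ℕ → T) → BT → Prop) :
    -- (1) the word length of `gₙ` is `2ⁿ`
    (∀ n : ℕ, 1 ≤ n → wlen (gseq n) = 2 ^ n) ∧
    -- (2) `d_{T'}(1, gₙ) / 2ⁿ` does not converge
    (¬ ∃ l : ℝ, Tendsto (fun n : ℕ => dist t₀ (gseq n • t₀) / 2 ^ n) atTop (𝓝 l)) ∧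
    -- (3) hence `ḡₙ y₀ = (gₙ t₀, 2ⁿ)` converges to no boundary point of `Y = T' × ℝ`
    (¬ ∃ (ζ : BT) (θ : ℝ),
      ConvToBdry TConv t₀ (fun n : ℕ => ((gseq n) • t₀, ((2:ℝ) ^ n))) ζ θ) :=
  stmt17_general t₀ hdist TConv
end
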